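/- (Extension theorem) Let (V, #, ∗) be a finite-dimensional hypervector space over a hyperfield (F, ⊕, ·), and let S = {α₁, α₂, ..., αₙ} be a linearly independent set of vectors in V. Then either S is a basis of V, or S can be extended to a basis of V; i.e., there exists a finite set T ⊇ S that is a basis of V. -/

import Mathlib

universe u v

/-- A hyperfield: `(F, ⊕, ·)` where `(F, ⊕)` is a commutative hypergroup with zero
element `zero` (each `a` having a unique additive inverse `neg a`, and satisfying
reversibility), and `·` is an associative commutative multiplication distributing
over `⊕` from both sides, with `a·0 = 0·a = 0`, an identity `one` and multiplicative
inverses for nonzero elements. -/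
structure Hyperfield (F : Type u) where
  add : F → F → Set F
  add_nonempty : ∀ a b, (add a b).Nonempty
  add_comm : ∀ a b, add a b = add b a
  add_assoc : ∀ a b c, (⋃ t ∈ add b c, add a t) = ⋃ t ∈ add a b, add t c
  zero : F
  neg : F → F
  neg_spec : ∀ a, zero ∈ add a (neg a) ∧ zero ∈ add (neg a) a
  neg_unique : ∀ a b, zero ∈ add a b → zero ∈ add b a → b = neg a
  reversible : ∀ a b c, a ∈ add b c → b ∈ add a (neg c)
  mul : F → F → F
  mul_assoc : ∀ a b c, mul (mul a b) c = mul a (mul b c)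
  left_distrib : ∀ a b c, (mul a) '' (add b c) = add (mul a b) (mul a c)
  right_distrib : ∀ a b c, (fun t => mul t a) '' (add b c) = add (mul b a) (mul c a)
  mul_zero : ∀ a, mul a zero = zero
  zero_mul : ∀ a, mul zero a = zero
  one : F
  mul_one : ∀ a, mul a one = a
  one_ne_zero : one ≠ zero
  mul_comm : ∀ a b, mul a b = mul b a
  exists_inv : ∀ a, a ≠ zero → ∃ b, mul a b = one

/-- A hypervector space `(V, #, ∗)` over a hyperfield `K` on `F`:
`(V, #)` is a commutative hypergroup with zero vector `vzero`, and
`∗ : F × V → P*(V)` satisfies (i) `a ∗ (α # β) ⊆ a∗α # a∗β`,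
(ii) `(a ⊕ b) ∗ α ⊆ a∗α # b∗α`, (iii) `(a·b) ∗ α = a ∗ (b ∗ α)`,
(iv) `1 ∗ α = {α}` and `0 ∗ α = {θ}`. -/
structure HypervectorSpace (F : Type u) (V : Type v) (K : Hyperfield F) where
  vadd : V → V → Set V
  vadd_nonempty : ∀ x y, (vadd x y).Nonempty
  vadd_comm : ∀ x y, vadd x y = vadd y x
  vadd_assoc : ∀ x y z, (⋃ t ∈ vadd y z, vadd x t) = ⋃ t ∈ vadd x y, vadd t z
  vzero : V
  vneg : V → V
  vneg_spec : ∀ x, vzero ∈ vadd x (vneg x) ∧ vzero ∈ vadd (vneg x) x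
  vneg_unique : ∀ x y, vzero ∈ vadd x y → vzero ∈ vadd y x → y = vneg x
  vreversible : ∀ x y z, x ∈ vadd y z → y ∈ vadd x (vneg z)
  smul : F → V → Set V
  smul_nonempty : ∀ a x, (smul a x).Nonempty
  smul_vadd : ∀ a x y, (⋃ t ∈ vadd x y, smul a t) ⊆ ⋃ u ∈ smul a x, ⋃ w ∈ smul a y, vadd u w
  add_smul : ∀ a b x, (⋃ t ∈ K.add a b, smul t x) ⊆ ⋃ u ∈ smul a x, ⋃ w ∈ smul b x, vadd u w
  mul_smul : ∀ a b x, smul (K.mul a b) x = ⋃ t ∈ smul b x, smul a t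
  one_smul : ∀ x, smul K.one x = {x}
  zero_smul : ∀ x, smul K.zero x = {vzero}

namespace HypervectorSpace

variable {F : Type u} {V : Type v} {K : Hyperfield F}

/-- The hyperoperation `#` extended to subsets: `A # B = ⋃_{a ∈ A, b ∈ B} a # b`. -/
def setVadd (H : HypervectorSpace F V K) (A B : Set V) : Set V :=
  ⋃ a ∈ A, ⋃ b ∈ B, H.vadd a b

/-- A subset `W` of a hypervector space is a hypersubspace if it is closed under `#`
and `∗`, contains the zero vector, and contains additive inverses. -/
def IsHypersubspace (H : HypervectorSpace F V K) (W : Set V) : Prop :=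
  (∀ α ∈ W, ∀ β ∈ W, H.vadd α β ⊆ W) ∧
  (∀ a : F, ∀ α ∈ W, H.smul a α ⊆ W) ∧
  H.vzero ∈ W ∧
  (∀ α ∈ W, H.vneg α ∈ W)

/-- Iterated hyperoperation `A₁ # A₂ # ... # Aₙ` on a list of subsets
(by convention the empty hypersum is `{θ}`). -/
def hsum (H : HypervectorSpace F V K) : List (Set V) → Set V
  | [] => {H.vzero}
  | [A] => A
  | A :: B :: rest => H.setVadd A (HypervectorSpace.hsum H (B :: rest))

/-- The linear combination set `a₁∗α₁ # a₂∗α₂ # ... # aₙ∗αₙ`. -/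
def lincomb (H : HypervectorSpace F V K) {n : ℕ} (a : Fin n → F) (α : Fin n → V) : Set V :=
  H.hsum (List.ofFn fun i => H.smul (a i) (α i))

/-- The hyperlinear span `HL(α₁, ..., αₙ) = ⋃ { a₁∗α₁ # ... # aₙ∗αₙ : a₁, ..., aₙ ∈ F }`. -/
def HL (H : HypervectorSpace F V K) {n : ℕ} (α : Fin n → V) : Set V :=
  ⋃ a : Fin n → F, H.lincomb a α

/-- The family `α₁, ..., αₙ` is linearly dependent if `θ ∈ a₁∗α₁ # ... # aₙ∗αₙ`
for some scalars `a₁, ..., aₙ`, not all zero. -/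
def LinDep (H : HypervectorSpace F V K) {n : ℕ} (α : Fin n → V) : Prop :=
  ∃ a : Fin n → F, (∃ i, a i ≠ K.zero) ∧ H.vzero ∈ H.lincomb a α

/-- Strongly left distributive: equality `(a ⊕ b) ∗ α = a∗α # b∗α`. -/
def StronglyLeftDistrib (H : HypervectorSpace F V K) : Prop :=
  ∀ (a b : F) (x : V),
    (⋃ t ∈ K.add a b, H.smul t x) = ⋃ u ∈ H.smul a x, ⋃ w ∈ H.smul b x, H.vadd u w

/-- The set of all finite linear combinations of elements of `S`. -/
def HLSet (H : HypervectorSpace F V K) (S : Set V) : Set V :=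
  ⋃ n : ℕ, ⋃ β : Fin n → V, ⋃ (_ : ∀ i, β i ∈ S), H.HL β

/-- A set `S` is linearly independent if every finite family of distinct elements
of `S` is linearly independent. -/
def LinIndepSet (H : HypervectorSpace F V K) (S : Set V) : Prop :=
  ∀ (n : ℕ) (β : Fin n → V), Function.Injective β → (∀ i, β i ∈ S) → ¬ H.LinDep β

/-- `S` is a basis of the hypersubspace `U`: `S ⊆ U`, `S` is linearly independent,
and every element of `U` is a finite linear combination of elements of `S`. -/
def IsBasisOf (H : HypervectorSpace F V K) (S U : Set V) : Prop :=
  S ⊆ U ∧ H.LinIndepSet S ∧ U ⊆ H.HLSet S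

end HypervectorSpace


/-!
Extend the independent set one vector of a finite spanning set at a time. A vector `x` outside
the span of an independent set `T` can be adjoined to `T`: in a dependence relation among `x` and
vectors of `T`, the coefficient `a` of `x` is nonzero (as `T` is independent), and multiplying by
`a⁻¹` expresses `x` as a linear combination of `T`. Once the spanning set lies in the span of the
enlarged set, so does all of `V`, since taking spans is idempotent.
-/

theorem Hyperfield.neg_eq_neg_one_mul {F : Type u} (K : Hyperfield F) (a : F) :
    K.neg a = K.mul (K.neg K.one) a := by
  have h : K.zero ∈ K.add (K.mul K.one a) (K.mul (K.neg K.one) a) := by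
    rw [← K.right_distrib]
    exact ⟨K.zero, (K.neg_spec K.one).1, K.zero_mul a⟩
  rw [K.mul_comm K.one a, K.mul_one] at h
  exact (K.neg_unique a _ h (K.add_comm a _ ▸ h)).symm

namespace HypervectorSpace

variable {F : Type u} {V : Type v} {K : Hyperfield F} (H : HypervectorSpace F V K)

theorem vneg_vneg (x : V) : H.vneg (H.vneg x) = x :=
  (H.vneg_unique _ _ (H.vneg_spec x).2 (H.vneg_spec x).1).symm

theorem eq_vneg_of_vzero_mem_vadd {x y : V} (h : H.vzero ∈ H.vadd x y) : x = H.vneg y :=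
  H.vneg_unique y x (by rwa [H.vadd_comm]) h

theorem vzero_vadd (x : V) : H.vadd H.vzero x = {x} :=
  (H.vadd_nonempty _ _).subset_singleton_iff.1 fun y hy =>
    (H.eq_vneg_of_vzero_mem_vadd (H.vreversible y H.vzero x hy)).trans (H.vneg_vneg x)

theorem vneg_vzero : H.vneg H.vzero = H.vzero :=
  (H.eq_vneg_of_vzero_mem_vadd (by rw [H.vzero_vadd]; rfl)).symm

theorem vneg_mem_vadd_vneg {x y z : V} (h : z ∈ H.vadd x y) :
    H.vneg z ∈ H.vadd (H.vneg x) (H.vneg y) := by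
  have hx : x ∈ H.vadd (H.vneg y) z := H.vadd_comm z _ ▸ H.vreversible z x y h
  have hy : H.vneg y ∈ H.vadd (H.vneg z) x :=
    H.vadd_comm x _ ▸ H.vreversible x (H.vneg y) z hx
  exact H.vadd_comm (H.vneg y) _ ▸ H.vreversible (H.vneg y) (H.vneg z) x hy

theorem mem_setVadd {A B : Set V} {x : V} :
    x ∈ H.setVadd A B ↔ ∃ y ∈ A, ∃ z ∈ B, x ∈ H.vadd y z := by
  simp [setVadd]

theorem setVadd_comm (A B : Set V) : H.setVadd A B = H.setVadd B A := by
  ext x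
  simp only [mem_setVadd]
  exact ⟨fun ⟨y, hy, z, hz, hx⟩ => ⟨z, hz, y, hy, H.vadd_comm y z ▸ hx⟩,
    fun ⟨y, hy, z, hz, hx⟩ => ⟨z, hz, y, hy, H.vadd_comm y z ▸ hx⟩⟩

theorem setVadd_assoc (A B C : Set V) :
    H.setVadd (H.setVadd A B) C = H.setVadd A (H.setVadd B C) := by
  ext x
  simp only [mem_setVadd]
  constructor
  · rintro ⟨t, ⟨a, ha, b, hb, ht⟩, c, hc, hx⟩
    have : x ∈ ⋃ s ∈ H.vadd b c, H.vadd a s := H.vadd_assoc a b c ▸ Set.mem_biUnion ht hx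
    obtain ⟨s, hs, hx⟩ := Set.mem_iUnion₂.1 this
    exact ⟨a, ha, s, ⟨b, hb, c, hc, hs⟩, hx⟩
  · rintro ⟨a, ha, s, ⟨b, hb, c, hc, hs⟩, hx⟩
    have : x ∈ ⋃ t ∈ H.vadd a b, H.vadd t c := H.vadd_assoc a b c ▸ Set.mem_biUnion hs hx
    obtain ⟨t, ht, hx⟩ := Set.mem_iUnion₂.1 this
    exact ⟨t, ⟨a, ha, b, hb, ht⟩, c, hc, hx⟩

theorem vzero_setVadd (A : Set V) : H.setVadd {H.vzero} A = A := by
  ext x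
  simp [mem_setVadd, vzero_vadd]

/-- Subsets of `V` form a commutative monoid under `#` with unit `{θ}`, in which iterated
hypersums become finite products. -/
def SetMonoid (_ : HypervectorSpace F V K) : Type v := Set V

def toSetMonoid (A : Set V) : H.SetMonoid := A

instance : CommMonoid H.SetMonoid where
  mul := H.setVadd
  one := ({H.vzero} : Set V)
  mul_assoc := H.setVadd_assoc
  one_mul := H.vzero_setVadd
  mul_one A := (H.setVadd_comm A _).trans (H.vzero_setVadd A)
  mul_comm := H.setVadd_comm

theorem hsum_cons (A : Set V) (L : List (Set V)) :
    H.hsum (A :: L) = H.setVadd A (H.hsum L) := by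
  cases L with
  | nil => exact ((H.setVadd_comm _ _).trans (H.vzero_setVadd A)).symm
  | cons B L => rfl

theorem hsum_eq_prod (L : List H.SetMonoid) : H.hsum L = L.prod := by
  induction L with
  | nil => rfl
  | cons A L ih => rw [List.prod_cons, ← ih]; exact H.hsum_cons A L

theorem prod_smul_eq_lincomb {n : ℕ} (a : Fin n → F) (α : Fin n → V) :
    ∏ i, H.toSetMonoid (H.smul (a i) (α i)) = H.lincomb a α :=
  List.prod_ofFn.symm.trans (H.hsum_eq_prod _).symm

theorem lincomb_zero (a : Fin 0 → F) (α : Fin 0 → V) : H.lincomb a α = {H.vzero} := rfl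

theorem lincomb_succ {n : ℕ} (a : Fin (n + 1) → F) (α : Fin (n + 1) → V) :
    H.lincomb a α = H.setVadd (H.smul (a 0) (α 0)) (H.lincomb (Fin.tail a) (Fin.tail α)) := by
  rw [lincomb, List.ofFn_succ, hsum_cons]
  rfl

theorem lincomb_append {m n : ℕ} (a : Fin m → F) (b : Fin n → F)
    (α : Fin m → V) (β : Fin n → V) :
    H.lincomb (Fin.append a b) (Fin.append α β) = H.setVadd (H.lincomb a α) (H.lincomb b β) := by
  simp only [← prod_smul_eq_lincomb, Fin.prod_univ_add, Fin.append_left, Fin.append_right]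
  rfl

theorem lincomb_extend {m n : ℕ} {σ : Fin m → Fin n} (hσ : σ.Injective)
    (b : Fin m → F) (α : Fin n → V) :
    H.lincomb (Function.extend σ b fun _ => K.zero) α = H.lincomb b (α ∘ σ) := by
  rw [← prod_smul_eq_lincomb, ← prod_smul_eq_lincomb]
  refine (Fintype.prod_of_injective (M := H.SetMonoid) σ hσ _ _
    (fun j hj => ?_) fun i => ?_).symm
  · rw [Function.extend_apply' _ _ _ hj]
    exact H.zero_smul (α j)
  · rw [hσ.extend_apply]
    rfl

theorem linDep_of_linDep_comp {m n : ℕ} {σ : Fin m → Fin n} (hσ : σ.Injective)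
    {α : Fin n → V} (h : H.LinDep (α ∘ σ)) : H.LinDep α := by
  obtain ⟨b, ⟨i, hi⟩, hθ⟩ := h
  refine ⟨Function.extend σ b fun _ => K.zero, ⟨σ i, ?_⟩, H.lincomb_extend hσ b α ▸ hθ⟩
  rwa [hσ.extend_apply]

theorem smul_vzero (c : F) : H.smul c H.vzero = {H.vzero} := by
  simpa [K.mul_zero, H.zero_smul] using (H.mul_smul c K.zero H.vzero).symm

theorem smul_subset_lincomb_mul (c : F) : ∀ {n : ℕ} {a : Fin n → F} {α : Fin n → V} {x : V},
    x ∈ H.lincomb a α → H.smul c x ⊆ H.lincomb (fun i => K.mul c (a i)) α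
  | 0, a, α, x, hx => by
    rw [lincomb_zero, Set.mem_singleton_iff] at hx
    rw [hx, smul_vzero, lincomb_zero]
  | n + 1, a, α, x, hx => by
    obtain ⟨y, hy, z, hz, hx⟩ := H.mem_setVadd.1 (H.lincomb_succ a α ▸ hx)
    intro w hw
    obtain ⟨y', hy', z', hz', hw⟩ :=
      H.mem_setVadd.1 (H.smul_vadd c y z (Set.mem_biUnion hx hw))
    rw [lincomb_succ, mem_setVadd]
    exact ⟨y', H.mul_smul c (a 0) (α 0) ▸ Set.mem_biUnion hy hy', z',
      smul_subset_lincomb_mul c hz hz', hw⟩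

theorem vneg_mem_smul_neg_one (x : V) : H.vneg x ∈ H.smul (K.neg K.one) x := by
  have hθ : H.vzero ∈ ⋃ t ∈ K.add K.one (K.neg K.one), H.smul t x :=
    Set.mem_biUnion (K.neg_spec K.one).1 (by rw [H.zero_smul]; rfl)
  obtain ⟨y, hy, z, hz, hθ⟩ := H.mem_setVadd.1 (H.add_smul _ _ x hθ)
  rw [H.one_smul, Set.mem_singleton_iff] at hy
  rw [hy, H.vadd_comm] at hθ
  rwa [← H.eq_vneg_of_vzero_mem_vadd hθ]

theorem vneg_mem_smul_neg {a : F} {x y : V} (h : y ∈ H.smul a x) :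
    H.vneg y ∈ H.smul (K.neg a) x := by
  rw [K.neg_eq_neg_one_mul, H.mul_smul]
  exact Set.mem_biUnion h (H.vneg_mem_smul_neg_one y)

theorem vneg_mem_lincomb_neg : ∀ {n : ℕ} {a : Fin n → F} {α : Fin n → V} {x : V},
    x ∈ H.lincomb a α → H.vneg x ∈ H.lincomb (fun i => K.neg (a i)) α
  | 0, a, α, x, hx => by
    rw [lincomb_zero, Set.mem_singleton_iff] at hx
    rw [hx, vneg_vzero, lincomb_zero]
    rfl
  | n + 1, a, α, x, hx => by
    obtain ⟨y, hy, z, hz, hx⟩ := H.mem_setVadd.1 (H.lincomb_succ a α ▸ hx)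
    rw [lincomb_succ, mem_setVadd]
    exact ⟨H.vneg y, H.vneg_mem_smul_neg hy, H.vneg z, vneg_mem_lincomb_neg hz,
      H.vneg_mem_vadd_vneg hx⟩

theorem mem_HL {n : ℕ} {α : Fin n → V} {x : V} : x ∈ H.HL α ↔ ∃ a, x ∈ H.lincomb a α :=
  Set.mem_iUnion

theorem mem_HLSet {S : Set V} {x : V} :
    x ∈ H.HLSet S ↔ ∃ (n : ℕ) (β : Fin n → V), (∀ i, β i ∈ S) ∧ x ∈ H.HL β := by
  simp [HLSet]

theorem HL_subset_HLSet {S : Set V} {n : ℕ} {β : Fin n → V} (hβ : ∀ i, β i ∈ S) :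
    H.HL β ⊆ H.HLSet S :=
  fun _ hx => H.mem_HLSet.2 ⟨n, β, hβ, hx⟩

theorem HLSet_mono {S T : Set V} (h : S ⊆ T) : H.HLSet S ⊆ H.HLSet T := by
  intro x hx
  obtain ⟨n, β, hβ, hx⟩ := H.mem_HLSet.1 hx
  exact H.HL_subset_HLSet (fun i => h (hβ i)) hx

theorem subset_HLSet (S : Set V) : S ⊆ H.HLSet S := by
  intro x hx
  refine H.HL_subset_HLSet (β := fun _ : Fin 1 => x) (fun _ => hx)
    (H.mem_HL.2 ⟨fun _ => K.one, ?_⟩)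
  show x ∈ H.smul K.one x
  rw [H.one_smul]
  rfl

theorem vzero_mem_HLSet (S : Set V) : H.vzero ∈ H.HLSet S :=
  H.HL_subset_HLSet (β := Fin.elim0) (fun i => i.elim0) (H.mem_HL.2 ⟨Fin.elim0, rfl⟩)

theorem vadd_subset_HLSet {S : Set V} {x y : V} (hx : x ∈ H.HLSet S) (hy : y ∈ H.HLSet S) :
    H.vadd x y ⊆ H.HLSet S := by
  obtain ⟨m, β, hβ, hx⟩ := H.mem_HLSet.1 hx
  obtain ⟨n, γ, hγ, hy⟩ := H.mem_HLSet.1 hy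
  obtain ⟨a, hx⟩ := H.mem_HL.1 hx
  obtain ⟨b, hy⟩ := H.mem_HL.1 hy
  intro z hz
  have hβγ : ∀ i, Fin.append β γ i ∈ S :=
    (Fin.forall_fin_add _).2 ⟨by simpa using hβ, by simpa using hγ⟩
  refine H.HL_subset_HLSet hβγ (H.mem_HL.2 ⟨Fin.append a b, ?_⟩)
  rw [lincomb_append]
  exact H.mem_setVadd.2 ⟨x, hx, y, hy, hz⟩

theorem smul_subset_HLSet {S : Set V} (c : F) {x : V} (hx : x ∈ H.HLSet S) :
    H.smul c x ⊆ H.HLSet S := by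
  obtain ⟨n, β, hβ, hx⟩ := H.mem_HLSet.1 hx
  obtain ⟨a, hx⟩ := H.mem_HL.1 hx
  exact fun y hy => H.HL_subset_HLSet hβ (H.mem_HL.2 ⟨_, H.smul_subset_lincomb_mul c hx hy⟩)

theorem lincomb_subset_HLSet {S : Set V} : ∀ {n : ℕ} (a : Fin n → F) {β : Fin n → V},
    (∀ i, β i ∈ H.HLSet S) → H.lincomb a β ⊆ H.HLSet S
  | 0, a, β, _ => by
    rw [lincomb_zero, Set.singleton_subset_iff]
    exact H.vzero_mem_HLSet S
  | n + 1, a, β, hβ => by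
    intro x hx
    obtain ⟨y, hy, z, hz, hx⟩ := H.mem_setVadd.1 (H.lincomb_succ a β ▸ hx)
    exact H.vadd_subset_HLSet (H.smul_subset_HLSet _ (hβ 0) hy)
      (lincomb_subset_HLSet (Fin.tail a) (fun i => hβ i.succ) hz) hx

theorem HLSet_HLSet (S : Set V) : H.HLSet (H.HLSet S) = H.HLSet S := by
  refine subset_antisymm (fun x hx => ?_) (H.subset_HLSet _)
  obtain ⟨n, β, hβ, hx⟩ := H.mem_HLSet.1 hx
  obtain ⟨a, hx⟩ := H.mem_HL.1 hx
  exact H.lincomb_subset_HLSet a hβ hx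

theorem mem_smul_of_mul_eq_one {a c : F} (hc : K.mul c a = K.one) {x y : V}
    (hy : y ∈ H.smul a x) : x ∈ H.smul c y := by
  have h : H.smul c y ⊆ {x} := by
    rw [← H.one_smul x, ← hc, H.mul_smul]
    exact Set.subset_biUnion_of_mem hy
  rw [(H.smul_nonempty c y).subset_singleton_iff.1 h]
  rfl

theorem mem_HL_of_linDep_cons {n : ℕ} {x : V} {δ : Fin n → V} (hδ : ¬ H.LinDep δ)
    (h : H.LinDep (Fin.cons x δ)) : x ∈ H.HL δ := by
  obtain ⟨a, ⟨i, hi⟩, hθ⟩ := h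
  obtain ⟨y, hy, z, hz, hθ⟩ := H.mem_setVadd.1 (H.lincomb_succ a _ ▸ hθ)
  rw [Fin.cons_zero] at hy
  rw [Fin.tail_cons] at hz
  by_cases ha : a 0 = K.zero
  · rw [ha, H.zero_smul, Set.mem_singleton_iff] at hy
    rw [hy, vzero_vadd, Set.mem_singleton_iff] at hθ
    refine absurd ⟨Fin.tail a, ?_, hθ ▸ hz⟩ hδ
    rcases Fin.eq_zero_or_eq_succ i with rfl | ⟨j, rfl⟩
    · exact absurd ha hi
    · exact ⟨j, hi⟩
  · obtain ⟨c, hc⟩ := K.exists_inv _ ha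
    have hxc : x ∈ H.smul c (H.vneg z) :=
      H.mem_smul_of_mul_eq_one ((K.mul_comm _ _).trans hc)
        (H.eq_vneg_of_vzero_mem_vadd hθ ▸ hy)
    exact H.mem_HL.2 ⟨_, H.smul_subset_lincomb_mul c (H.vneg_mem_lincomb_neg hz) hxc⟩

theorem linIndepSet_range {n : ℕ} {α : Fin n → V} (h : ¬ H.LinDep α) :
    H.LinIndepSet (Set.range α) := by
  intro m β hβ hβα hdep
  choose σ hσ using hβα
  have hσ' : σ.Injective := fun i j hij => hβ (by rw [← hσ i, ← hσ j, hij])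
  exact h (H.linDep_of_linDep_comp hσ' ((funext hσ : α ∘ σ = β) ▸ hdep))

theorem linIndepSet_insert {T : Set V} {x : V} (hT : H.LinIndepSet T) (hx : x ∉ H.HLSet T) :
    H.LinIndepSet (insert x T) := by
  intro m γ hγ hγT hdep
  by_cases hxγ : ∃ i, γ i = x
  swap
  · exact hT m γ hγ (fun i => (hγT i).resolve_left fun h => hxγ ⟨i, h⟩) hdep
  obtain ⟨i, rfl⟩ := hxγ
  cases m with
  | zero => exact i.elim0
  | succ k =>
    -- move `γ i` to the front, so that the remaining vectors `δ` all lie in `T`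
    let e := Equiv.swap 0 i
    let δ := Fin.tail (γ ∘ e)
    have hδ : δ.Injective := (hγ.comp e.injective).comp (Fin.succ_injective k)
    have hδT : ∀ j, δ j ∈ T := fun j => (hγT _).resolve_left fun h =>
      Fin.succ_ne_zero j (e.injective (hγ (h.trans (by simp [e]))))
    have hdep' : H.LinDep (Fin.cons (γ i) δ) := by
      have hcons : Fin.cons (γ i) δ = γ ∘ e := by
        conv_rhs => rw [← Fin.cons_self_tail (γ ∘ e)]
        simp [e, δ]
      refine hcons ▸ H.linDep_of_linDep_comp e.injective ?_
      convert hdep using 1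
      funext j
      simp [e]
    exact hx (H.HL_subset_HLSet hδT (H.mem_HL_of_linDep_cons (hT k δ hδ hδT) hdep'))

theorem exists_linIndepSet_superset_subset_HLSet {S T : Set V} (hS : S.Finite) (hT : T.Finite)
    (hTi : H.LinIndepSet T) :
    ∃ T', T'.Finite ∧ T ⊆ T' ∧ H.LinIndepSet T' ∧ S ⊆ H.HLSet T' := by
  induction S, hS using Set.Finite.induction_on with
  | empty => exact ⟨T, hT, subset_rfl, hTi, Set.empty_subset _⟩
  | @insert x S _ _ ih =>
    obtain ⟨T', hT'fin, hTT', hT'i, hST'⟩ := ih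
    by_cases hx : x ∈ H.HLSet T'
    · exact ⟨T', hT'fin, hTT', hT'i, Set.insert_subset hx hST'⟩
    · refine ⟨insert x T', hT'fin.insert x, hTT'.trans (Set.subset_insert x T'),
        H.linIndepSet_insert hT'i hx, Set.insert_subset ?_ ?_⟩
      · exact H.subset_HLSet _ (Set.mem_insert x T')
      · exact hST'.trans (H.HLSet_mono (Set.subset_insert x T'))

end HypervectorSpace

theorem HypervectorSpace.extension_general {F : Type u} {V : Type v}
    {K : Hyperfield F} (H : HypervectorSpace F V K)
    (hfd : ∃ S : Set V, S.Finite ∧ H.LinIndepSet S ∧ H.HLSet S = Set.univ)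
    {n : ℕ} (α : Fin n → V)
    (hind : ¬ H.LinDep α) :
    ∃ T : Set V, T.Finite ∧ Set.range α ⊆ T ∧
      H.LinIndepSet T ∧ H.HLSet T = Set.univ := by
  obtain ⟨S, hSfin, -, hS⟩ := hfd
  obtain ⟨T, hTfin, hαT, hTi, hST⟩ :=
    H.exists_linIndepSet_superset_subset_HLSet hSfin (Set.finite_range α)
      (H.linIndepSet_range hind)
  refine ⟨T, hTfin, hαT, hTi, Set.eq_univ_of_univ_subset ?_⟩
  rw [← hS, ← H.HLSet_HLSet T]
  exact H.HLSet_mono hST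

/-- Extension theorem: in a finite-dimensional hypervector space, every linearly
independent finite set `S = {α₁, ..., αₙ}` is a basis or can be extended to a basis:
there is a finite basis `T ⊇ S`. -/
theorem HypervectorSpace.extension {F : Type u} {V : Type v}
    {K : Hyperfield F} (H : HypervectorSpace F V K)
    (hfd : ∃ S : Set V, S.Finite ∧ H.LinIndepSet S ∧ H.HLSet S = Set.univ)
    {n : ℕ} (α : Fin n → V) (hinj : Function.Injective α)
    (hind : ¬ H.LinDep α) :
    ∃ T : Set V, T.Finite ∧ Set.range α ⊆ T ∧
      H.LinIndepSet T ∧ H.HLSet T = Set.univ :=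
  HypervectorSpace.extension_general H hfd α hind
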